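/- arXiv:2605.10096 — 2 statements merged into one kernel-verified Lean document; each statement's English description precedes it below -/
import Mathlib

section
/- For every integer n ≥ 1 and every unit vector t = (cos θ, sin θ) in the plane, the sum over k = 0, …, n−1 of |t · ν_k|, where ν_k = (cos(πk/n), sin(πk/n)), equals 2n/π + O(1/n), with the implied constant absolute (uniform in θ and n). Concretely: there is an absolute constant C such that for all n ≥ 1 and all θ, |Σ_{k=0}^{n−1} |cos(θ − πk/n)| − 2n/π| ≤ C/n. -/
/-!
Writing `cos (θ - π k / n) = sin (y + k π / n)` with `y = π / 2 - θ`, the sum is `π / n`-periodic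
in `y`, so we may take `0 ≤ y < π / n`. There every sine is nonnegative and the sum telescopes:
with `u = π / (2 n)` it equals `cos (y - u) / sin u`, which lies between `cot u` and `csc u`.
Both of these are within `u` of `1 / u = 2 n / π`, so `C = π / 2` works.
-/

open Real Finset

theorem Function.Periodic.sum_range_add_nsmul {α M : Type*} [AddCommMonoid α]
    [AddCancelCommMonoid M] {g : α → M} {n : ℕ} {c : α} (hg : Function.Periodic g (n • c)) :
    Function.Periodic (fun x => ∑ k ∈ range n, g (x + k • c)) c := by
  intro x
  have hshift : ∀ k : ℕ, g (x + c + k • c) = g (x + (k + 1) • c) := fun k => by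
    rw [succ_nsmul, add_right_comm, add_assoc]
  apply add_right_cancel (b := g x)
  calc ∑ k ∈ range n, g (x + c + k • c) + g x
      = ∑ k ∈ range n, g (x + (k + 1) • c) + g (x + 0 • c) := by
        simp only [hshift, zero_nsmul, add_zero]
    _ = ∑ k ∈ range n, g (x + k • c) + g (x + n • c) := by
      rw [← sum_range_succ' (fun k => g (x + k • c)), sum_range_succ]
    _ = ∑ k ∈ range n, g (x + k • c) + g x := by rw [hg x]

theorem Real.sum_range_sin_mul_two_mul_sin (y d : ℝ) (n : ℕ) :
    (∑ k ∈ range n, sin (y + k * d)) * (2 * sin (d / 2)) =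
      cos (y - d / 2) - cos (y + n * d - d / 2) := by
  induction n with
  | zero => simp
  | succ n ih =>
    have hstep : sin (y + n * d) * (2 * sin (d / 2)) =
        cos (y + n * d - d / 2) - cos (y + n * d + d / 2) := by
      rw [cos_sub (y + n * d), cos_add (y + n * d)]; ring
    have hend : y + ((n + 1 : ℕ) : ℝ) * d - d / 2 = y + n * d + d / 2 := by push_cast; ring
    rw [sum_range_succ, add_mul, ih, hstep, hend]
    ring

theorem Real.sum_range_abs_sin_mul_sin_eq_cos {n : ℕ} (hn : n ≠ 0) {y : ℝ} (hy₀ : 0 ≤ y)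
    (hy : y ≤ π / n) :
    (∑ k ∈ range n, |sin (y + k * (π / n))|) * sin (π / (2 * n)) = cos (y - π / (2 * n)) := by
  have hn' : (n : ℝ) ≠ 0 := Nat.cast_ne_zero.mpr hn
  have hsin_nonneg : ∀ k ∈ range n, |sin (y + k * (π / n))| = sin (y + k * (π / n)) := by
    intro k hk
    have hk : (k : ℝ) + 1 ≤ n := by exact_mod_cast mem_range.mp hk
    refine abs_of_nonneg (sin_nonneg_of_nonneg_of_le_pi (by positivity) ?_)
    calc y + k * (π / n) ≤ (k + 1) * (π / n) := by linarith
      _ ≤ n * (π / n) := by gcongr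
      _ = π := by field_simp
  have htelescope := sum_range_sin_mul_two_mul_sin y (π / n) n
  have hend : y + n * (π / n) - π / n / 2 = y - π / (2 * n) + π := by field_simp; ring
  rw [hend, cos_add_pi, div_div, mul_comm (n : ℝ) 2] at htelescope
  rw [sum_congr rfl hsin_nonneg]
  linarith

theorem Real.abs_div_sin_sub_inv_le {u c : ℝ} (hu₀ : 0 < u) (hu : u ≤ π / 2)
    (hc₀ : cos u ≤ c) (hc₁ : c ≤ 1) : |c / sin u - u⁻¹| ≤ u := by
  have hsin_ge : 2 / π * u ≤ sin u := mul_le_sin hu₀.le hu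
  have hsin_pos : 0 < sin u := lt_of_lt_of_le (by positivity) hsin_ge
  have hπ : 1 / 2 ≤ 2 / π := by
    rw [div_le_div_iff₀ (by norm_num) pi_pos]; linarith [pi_le_four]
  have hcube : u ^ 3 / 2 ≤ u ^ 2 * sin u := calc
    u ^ 3 / 2 ≤ u ^ 2 * (2 / π * u) := by
      nlinarith [mul_le_mul_of_nonneg_left hπ (pow_pos hu₀ 3).le]
    _ ≤ u ^ 2 * sin u := by gcongr
  have hdiff : c / sin u - u⁻¹ = (c * u - sin u) / (u * sin u) := by field_simp
  rw [hdiff, abs_le, le_div_iff₀ (by positivity), div_le_iff₀ (by positivity)]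
  constructor
  · -- `sin u - u cos u ≤ u ^ 3 / 2`
    nlinarith [sin_le hu₀.le, one_sub_sq_div_two_le_cos (x := u)]
  · -- `u - sin u ≤ u ^ 3 / 6`
    nlinarith [sin_ge_sub_cube hu₀.le]

theorem angular_quadrature :
    ∃ C : ℝ, 0 < C ∧ ∀ n : ℕ, 1 ≤ n → ∀ θ : ℝ,
      |(∑ k ∈ Finset.range n, |Real.cos (θ - Real.pi * k / n)|) - 2 * n / Real.pi|
        ≤ C / n := by
  refine ⟨π / 2, by positivity, fun n hn θ => ?_⟩
  have hn' : (n : ℝ) ≠ 0 := by positivity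
  have hperiodic : Function.Periodic (fun x => ∑ k ∈ range n, |sin (x + k • (π / n))|) (π / n) :=
    Function.Periodic.sum_range_add_nsmul (g := fun x => |sin x|) fun x => by
      simp only [nsmul_eq_mul, mul_div_cancel₀ _ hn', sin_add_pi, abs_neg]
  obtain ⟨y, ⟨hy₀, hy⟩, hy_eq⟩ := hperiodic.exists_mem_Ico₀ (by positivity) (π / 2 - θ)
  have hshift : ∑ k ∈ range n, |cos (θ - π * k / n)| = ∑ k ∈ range n, |sin (y + k * (π / n))| :=
    calc _ = ∑ k ∈ range n, |sin (π / 2 - θ + k • (π / n))| := sum_congr rfl fun k _ => by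
          rw [nsmul_eq_mul, ← sin_pi_div_two_sub]; ring_nf
      _ = _ := by simpa only [nsmul_eq_mul] using hy_eq
  set u := π / (2 * n) with hu
  have hu₀ : 0 < u := by positivity
  have hu_le : u ≤ π / 2 := div_le_div_of_nonneg_left pi_pos.le two_pos (by
    have : (1 : ℝ) ≤ n := by exact_mod_cast hn
    linarith)
  have hsin_pos : 0 < sin u := sin_pos_of_pos_of_lt_pi hu₀ (by linarith [pi_pos])
  have hyu : |y - u| ≤ u := abs_le.mpr ⟨by linarith, by rw [hu]; field_simp at hy ⊢; linarith⟩
  have hcos_le : cos u ≤ cos (y - u) := by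
    rw [← cos_abs (y - u)]
    exact cos_le_cos_of_nonneg_of_le_pi (abs_nonneg _) (by linarith) hyu
  rw [hshift, eq_div_of_mul_eq hsin_pos.ne' (sum_range_abs_sin_mul_sin_eq_cos (by omega) hy₀ hy.le),
    show 2 * (n : ℝ) / π = u⁻¹ by rw [hu]; field_simp, show π / 2 / n = u by rw [hu]; field_simp]
  exact abs_div_sin_sub_inv_le hu₀ hu_le hcos_le (cos_le_one _)
end

section
/- Let g : ℝ → ℝ be a compactly supported function of bounded variation, let ε > 0 and u ∈ ℝ. Then |Σ_{q∈ℤ} g(ε(q+u)) − (1/ε)∫_ℝ g(s) ds| ≤ Var(g), where Var(g) denotes the total variation of g over ℝ. -/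
open Real Set MeasureTheory

private lemma finset_Icc_int_insert (a b : ℤ) (hab : a ≤ b) :
    Finset.Icc a (b + 1) = insert (b + 1) (Finset.Icc a b) := by
  ext x
  simp only [Finset.mem_Icc, Finset.mem_insert]
  omega

private lemma sum_adjacent_integrals (g : ℝ → ℝ) (hint : MeasureTheory.Integrable g)
    (x : ℤ → ℝ) (a : ℤ) :
    ∀ b, a ≤ b → ∑ q ∈ Finset.Icc a b, (∫ s in (x q)..(x (q + 1)), g s)
      = ∫ s in (x a)..(x (b + 1)), g s := by
  refine Int.le_induction ?_ ?_
  · simp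
  · intro n hn ih
    rw [finset_Icc_int_insert a n hn, Finset.sum_insert (by simp), ih, add_comm]
    exact intervalIntegral.integral_add_adjacent_intervals
      hint.intervalIntegrable hint.intervalIntegrable

private lemma sum_adjacent_evar (g : ℝ → ℝ) (x : ℤ → ℝ) (hx : Monotone x) (a : ℤ) :
    ∀ b, a ≤ b → ∑ q ∈ Finset.Icc a b, eVariationOn g (Set.Icc (x q) (x (q + 1)))
      = eVariationOn g (Set.Icc (x a) (x (b + 1))) := by
  refine Int.le_induction ?_ ?_
  · simp
  · intro n hn ih
    rw [finset_Icc_int_insert a n hn, Finset.sum_insert (by simp), ih, add_comm]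
    have h := eVariationOn.Icc_add_Icc g (s := Set.univ)
      (hx (by omega : a ≤ n + 1)) (hx (by omega : (n:ℤ) + 1 ≤ n + 1 + 1))
      (Set.mem_univ (x (n + 1)))
    simpa using h

theorem bv_riemann_sum (g : ℝ → ℝ) (hsupp : HasCompactSupport g)
    (hbv : eVariationOn g Set.univ ≠ ⊤) (ε u : ℝ) (hε : 0 < ε) :
    |(∑' q : ℤ, g (ε * (q + u))) - (1 / ε) * ∫ s, g s|
      ≤ (eVariationOn g Set.univ).toReal := by
  -- the sample points
  set x : ℤ → ℝ := fun q => ε * (q + u) with hx_def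
  have hx_succ : ∀ q : ℤ, x (q + 1) = x q + ε := by
    intro q; simp only [hx_def]; push_cast; ring
  have hx_mono : Monotone x := by
    intro p q hpq
    simp only [hx_def]
    have : (p : ℝ) ≤ q := by exact_mod_cast hpq
    nlinarith
  -- g is measurable
  have hlbv : LocallyBoundedVariationOn g Set.univ :=
    (BoundedVariationOn.locallyBoundedVariationOn hbv)
  obtain ⟨p, q, hp, hq, hpq⟩ := hlbv.exists_monotoneOn_sub_monotoneOn
  have hmeas : Measurable g := by
    rw [hpq]
    exact ((monotoneOn_univ.mp hp).measurable.sub (monotoneOn_univ.mp hq).measurable)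
  -- g is bounded
  have hbound : ∀ s : ℝ, |g s| ≤ |g 0| + (eVariationOn g Set.univ).toReal := by
    intro s
    have h1 : dist (g s) (g 0) ≤ (eVariationOn g Set.univ).toReal := by
      rw [dist_edist]
      exact ENNReal.toReal_mono hbv
        (eVariationOn.edist_le g (Set.mem_univ s) (Set.mem_univ 0))
    have := abs_sub_abs_le_abs_sub (g s) (g 0)
    rw [Real.dist_eq] at h1
    linarith
  -- support bound
  obtain ⟨R, hR0, hR⟩ := hsupp.isCompact.isBounded.subset_closedBall_lt 0 0
  have hsupp' : ∀ s : ℝ, s < -R ∨ R < s → g s = 0 := by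
    intro s hs
    by_contra h
    have : s ∈ tsupport g := subset_tsupport g h
    have := hR this
    rw [Real.closedBall_eq_Icc] at this
    simp only [Set.mem_Icc, zero_sub, zero_add] at this
    rcases hs with hs | hs <;> linarith [this.1, this.2]
  -- g is integrable
  have hint : MeasureTheory.Integrable g := by
    have h1 : MeasureTheory.IntegrableOn g (Set.Icc (-R) R) := by
      apply MeasureTheory.Measure.integrableOn_of_bounded
        (M := |g 0| + (eVariationOn g Set.univ).toReal)
      · exact (measure_Icc_lt_top).ne
      · exact hmeas.aestronglyMeasurable
      · exact ae_of_all _ fun s => hbound s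
    apply h1.integrable_of_forall_notMem_eq_zero
    intro s hs
    simp only [Set.mem_Icc, not_and_or, not_le] at hs
    exact hsupp' s (hs.imp (fun h => by linarith) (fun h => by linarith))
  -- choose N
  obtain ⟨N, hN⟩ := exists_int_gt (R / ε + |u| + 1)
  have hNpos : 0 < N := by
    have h1 : (0:ℝ) < N := lt_trans (by positivity) hN
    exact_mod_cast h1
  have hxN : R < x N := by
    simp only [hx_def]
    have h1 : R / ε + 1 < (N : ℝ) + u := by
      have := abs_le.mp (le_refl |u|)
      have hu : -|u| ≤ u := neg_abs_le u
      linarith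
    have h2 : R / ε < (N : ℝ) + u := by linarith
    calc R = ε * (R / ε) := by field_simp; try ring
    _ < ε * ((N:ℝ) + u) := by exact mul_lt_mul_of_pos_left h2 hε
  have hxNn : x (-N) < -R := by
    simp only [hx_def]
    have hu : u ≤ |u| := le_abs_self u
    have h2 : ((-N : ℤ) : ℝ) + u < -(R / ε) := by push_cast; linarith
    calc ε * (((-N : ℤ) : ℝ) + u) < ε * (-(R / ε)) := mul_lt_mul_of_pos_left h2 hε
    _ = -R := by field_simp; try ring
  -- the tsum is a finite sum
  have hts : (∑' q : ℤ, g (ε * (q + u))) = ∑ q ∈ Finset.Icc (-N) N, g (x q) := by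
    apply tsum_eq_sum
    intro q hq
    simp only [Finset.mem_Icc, not_and_or, not_le] at hq
    show g (x q) = 0
    rcases hq with hq | hq
    · have h1 := hx_succ (-N - 1)
      rw [show (-N : ℤ) - 1 + 1 = -N by ring] at h1
      have h2 : x q ≤ x (-N - 1) := hx_mono (by omega)
      exact hsupp' _ (Or.inl (by linarith))
    · apply hsupp' _ (Or.inr ?_)
      calc R < x N := hxN
      _ ≤ x q := hx_mono (by omega)
  -- the integral as a finite sum
  have hInt : (∫ s, g s) = ∑ q ∈ Finset.Icc (-N) N, ∫ s in (x q)..(x (q + 1)), g s := by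
    rw [sum_adjacent_integrals g hint x (-N) N (by omega)]
    rw [intervalIntegral.integral_eq_integral_of_support_subset]
    intro s hs
    have hs1 : s ∈ Set.Icc (-R) R := by
      by_contra h
      simp only [Set.mem_Icc, not_and_or, not_le] at h
      exact hs (hsupp' s (h.imp (fun h => by linarith) (fun h => by linarith)))
    constructor
    · exact lt_of_lt_of_le hxNn hs1.1
    · calc s ≤ R := hs1.2
      _ ≤ x N := hxN.le
      _ ≤ x (N + 1) := hx_mono (by omega)
  -- finiteness of local variations
  have hfin : ∀ a b : ℝ, eVariationOn g (Set.Icc a b) ≠ ⊤ := fun a b =>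
    ne_top_of_le_ne_top hbv (eVariationOn.mono g (Set.subset_univ _))
  -- per-term bound
  have hterm : ∀ q : ℤ, |g (x q) - (1 / ε) * ∫ s in (x q)..(x (q + 1)), g s|
      ≤ (eVariationOn g (Set.Icc (x q) (x (q + 1)))).toReal := by
    intro q
    set v := (eVariationOn g (Set.Icc (x q) (x (q + 1)))).toReal with hv
    have hab : x q ≤ x (q + 1) := hx_mono (by omega)
    have hkey : ∀ s ∈ Set.Ioc (x q) (x (q + 1)), ‖g (x q) - g s‖ ≤ v := by
      intro s hs
      have h1 : dist (g (x q)) (g s) ≤ v := by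
        rw [dist_edist]
        exact ENNReal.toReal_mono (hfin _ _)
          (eVariationOn.edist_le g (Set.left_mem_Icc.mpr hab)
            ⟨hs.1.le, hs.2⟩)
      rwa [Real.dist_eq] at h1
    have hIoc : Set.uIoc (x q) (x (q + 1)) = Set.Ioc (x q) (x (q + 1)) :=
      Set.uIoc_of_le hab
    have h2 : ‖∫ s in (x q)..(x (q + 1)), (g (x q) - g s)‖ ≤ v * |x (q + 1) - x q| := by
      apply intervalIntegral.norm_integral_le_of_norm_le_const
      intro s hs
      rw [hIoc] at hs
      exact hkey s hs
    have h3 : (∫ s in (x q)..(x (q + 1)), (g (x q) - g s))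
        = ε * g (x q) - ∫ s in (x q)..(x (q + 1)), g s := by
      rw [intervalIntegral.integral_sub intervalIntegrable_const hint.intervalIntegrable,
        intervalIntegral.integral_const, hx_succ, smul_eq_mul]
      ring_nf
    have hlen : |x (q + 1) - x q| = ε := by
      rw [hx_succ]; simp [abs_of_pos hε]
    rw [hlen] at h2
    rw [h3] at h2
    have h4 : g (x q) - (1 / ε) * ∫ s in (x q)..(x (q + 1)), g s
        = (1 / ε) * (ε * g (x q) - ∫ s in (x q)..(x (q + 1)), g s) := by
      field_simp
      try ring
    rw [h4, abs_mul, abs_of_pos (by positivity : (0:ℝ) < 1 / ε)]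
    rw [Real.norm_eq_abs] at h2
    calc (1 / ε) * |ε * g (x q) - ∫ s in (x q)..(x (q + 1)), g s|
        ≤ (1 / ε) * (v * ε) := by
          apply mul_le_mul_of_nonneg_left h2 (by positivity)
    _ = v := by field_simp; try ring
  -- assemble
  rw [hts, hInt, Finset.mul_sum, ← Finset.sum_sub_distrib]
  calc |∑ q ∈ Finset.Icc (-N) N, (g (x q) - (1 / ε) * ∫ s in (x q)..(x (q + 1)), g s)|
      ≤ ∑ q ∈ Finset.Icc (-N) N, |g (x q) - (1 / ε) * ∫ s in (x q)..(x (q + 1)), g s| :=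
        Finset.abs_sum_le_sum_abs _ _
    _ ≤ ∑ q ∈ Finset.Icc (-N) N, (eVariationOn g (Set.Icc (x q) (x (q + 1)))).toReal :=
        Finset.sum_le_sum fun q _ => hterm q
    _ = (∑ q ∈ Finset.Icc (-N) N, eVariationOn g (Set.Icc (x q) (x (q + 1)))).toReal :=
        (ENNReal.toReal_sum fun q _ => hfin _ _).symm
    _ ≤ (eVariationOn g Set.univ).toReal := by
        apply ENNReal.toReal_mono hbv
        rw [sum_adjacent_evar g x hx_mono (-N) N (by omega)]
        exact eVariationOn.mono g (Set.subset_univ _)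
end
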